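/- Let a Dyck word σ factorize as σ = L · π₁ · R, where π₁ is a Dyck word. Then the word π₂ = L · R is also a Dyck word, and width(σ) ≤ max(width(π₁), 1 + width(π₂)). -/

import Mathlib

/-- A Dyck word: entries ±1, total sum zero, all prefix sums nonnegative. -/
def IsDyck (w : List ℤ) : Prop :=
  (∀ a ∈ w, a = 1 ∨ a = -1) ∧ w.sum = 0 ∧ ∀ k, 0 ≤ (w.take k).sum

/-- Width of a finite set of naturals: the least number of intervals of
consecutive integers whose union equals the set. -/
noncomputable def setWidth (S : Finset ℕ) : ℕ :=
  sInf {k | ∃ f : Fin k → ℕ × ℕ, (S : Set ℕ) = ⋃ i, Set.Icc (f i).1 (f i).2}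

/-- A re-pairing of a word `w` over `{+1, -1}` (positions are 0-based):
a sequence of pairs (ℓᵢ, rᵢ) with w(ℓᵢ) = +1, w(rᵢ) = −1, ℓᵢ < rᵢ, such that
every position of `w` occurs in exactly one pair. -/
structure RePairing (w : List ℤ) where
  pairs : List (ℕ × ℕ)
  perm : (pairs.flatMap fun q => [q.1, q.2]).Perm (List.range w.length)
  lt : ∀ q ∈ pairs, q.1 < q.2
  plus : ∀ q ∈ pairs, w.getD q.1 0 = 1
  minus : ∀ q ∈ pairs, w.getD q.2 0 = -1

/-- The width of a re-pairing: maximum over times `t` of the width of the set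
of positions erased within the first `t` pairs. -/
noncomputable def repWidth {w : List ℤ} (p : RePairing w) : ℕ :=
  (Finset.range (p.pairs.length + 1)).sup
    fun t => setWidth ((p.pairs.take t).flatMap fun q => [q.1, q.2]).toFinset

/-- Width of a word: minimum width over all its re-pairings. -/
noncomputable def dyckWidth (w : List ℤ) : ℕ :=
  sInf {k | ∃ p : RePairing w, repWidth p = k}


section AuxExist

lemma map_getD_range' (w : List ℤ) :
    (List.range w.length).map (fun i => w.getD i 0) = w := by
  induction w with
  | nil => simp
  | cons a w ih =>
    have h0 : (List.range (w.length + 1)).map (fun i => (a :: w).getD i 0)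
        = a :: (List.range w.length).map (fun i => w.getD i 0) := by
      rw [List.range_succ_eq_map, List.map_cons, List.map_map]
      rfl
    rw [List.length_cons, h0, ih]

lemma sum_map_pm (v : ℕ → ℤ) (l : List ℕ) (h : ∀ i ∈ l, v i = 1 ∨ v i = -1) :
    (l.map v).sum = ((l.filter fun i => v i = 1).length : ℤ)
      - ((l.filter fun i => v i = -1).length : ℤ) := by
  induction l with
  | nil => simp
  | cons a l ih =>
    have ha := h a (by simp)
    have ih' := ih (fun i hi => h i (by simp [hi]))
    rcases ha with ha | ha <;>
      simp [List.filter_cons, ha, ih'] <;> push_cast <;> ring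

lemma exists_repairing (w : List ℤ) (hw : IsDyck w) : Nonempty (RePairing w) := by
  obtain ⟨he, hs, hpre⟩ := hw
  set len := w.length with hlen
  set v : ℕ → ℤ := fun i => w.getD i 0 with hv
  have hv' : ∀ i < len, v i = 1 ∨ v i = -1 := by
    intro i hi
    have h2 : v i = w[i]'(by omega) := by rw [hv]; exact List.getD_eq_getElem w 0 (by omega)
    rw [h2]
    exact he _ (List.getElem_mem _)
  set P : List ℕ := (List.range len).filter (fun i => v i = 1) with hP
  set M : List ℕ := (List.range len).filter (fun i => v i = -1) with hM
  -- prefix-sum formula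
  have hsum : ∀ k, k ≤ len → (w.take k).sum =
      (((List.range k).filter fun i => v i = 1).length : ℤ)
        - (((List.range k).filter fun i => v i = -1).length : ℤ) := by
    intro k hk
    have h1 : w.take k = (List.range k).map v := by
      rw [hv]
      conv_lhs => rw [← map_getD_range' w]
      rw [← List.map_take, List.take_range, show k ⊓ w.length = k by omega]
    rw [h1]
    exact sum_map_pm v _ (fun i hi => hv' i (lt_of_lt_of_le (List.mem_range.mp hi) hk))
  -- total counts equal
  have hPM : P.length = M.length := by
    have h0 := hsum len le_rfl
    rw [List.take_of_length_le hlen.ge, hs] at h0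
    rw [hP, hM]
    omega
  -- splitting a filtered range
  have hsplit : ∀ (p : ℕ → Bool) (k : ℕ), k ≤ len →
      (List.range len).filter p = (List.range k).filter p ++
        (((List.range (len - k)).map (fun x => k + x)).filter p) := by
    intro p k hk
    have h0 : List.range len = List.range k ++ (List.range (len - k)).map (fun x => k + x) := by
      rw [← List.range_add]
      congr 1
      omega
    rw [h0, List.filter_append]
  -- strict order lemma
  have hlt : ∀ i (h1 : i < P.length) (h2 : i < M.length), P[i] < M[i] := by
    intro i h1 h2
    by_contra hge
    push_neg at hge
    have hMmem : M[i] ∈ M := List.getElem_mem _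
    have hPmem : P[i] ∈ P := List.getElem_mem _
    have hMlt : M[i] < len := List.mem_range.mp (List.mem_of_mem_filter hMmem)
    have hne : P[i] ≠ M[i] := by
      intro h
      have h1' := List.of_mem_filter hPmem
      have h2' := List.of_mem_filter hMmem
      rw [h] at h1'
      simp only [decide_eq_true_eq] at h1' h2'
      rw [h1'] at h2'
      norm_num at h2'
    have hgt : M[i] + 1 ≤ P[i] := by omega
    set k := M[i] + 1 with hkdef
    have hk : k ≤ len := hMlt
    -- count of pluses below k is ≤ i
    have hcp : ((List.range k).filter fun i => v i = 1).length ≤ i := by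
      by_contra hc
      push_neg at hc
      have e : P[i]? = ((List.range k).filter fun i => v i = 1)[i]? := by
        rw [hP, hsplit _ k hk, List.getElem?_append_left (by omega)]
      rw [List.getElem?_eq_getElem h1] at e
      obtain ⟨hlt', hPi⟩ := List.getElem?_eq_some_iff.mp e.symm
      have hmem : P[i] ∈ (List.range k).filter fun i => v i = 1 := by
        rw [← hPi]; exact List.getElem_mem _
      have := List.mem_range.mp (List.mem_of_mem_filter hmem)
      omega
    -- count of minuses below k is ≥ i + 1
    have hcm : i + 1 ≤ ((List.range k).filter fun i => v i = -1).length := by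
      by_contra hc
      push_neg at hc
      have e : M[i]? = (((List.range (len - k)).map (fun x => k + x)).filter
          fun i => v i = -1)[i - ((List.range k).filter fun i => v i = -1).length]? := by
        rw [hM, hsplit _ k hk, List.getElem?_append_right (by omega)]
      rw [List.getElem?_eq_getElem h2] at e
      obtain ⟨hlt', hMi⟩ := List.getElem?_eq_some_iff.mp e.symm
      have hmem : M[i] ∈ ((List.range (len - k)).map (fun x => k + x)).filter
          fun i => v i = -1 := by
        rw [← hMi]; exact List.getElem_mem _
      have hmem2 := List.mem_of_mem_filter hmem
      rw [List.mem_map] at hmem2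
      obtain ⟨x, _, hx⟩ := hmem2
      omega
    have h0 := hpre k
    rw [hsum k hk] at h0
    omega
  -- build the pairing
  refine ⟨⟨P.zip M, ?_, ?_, ?_, ?_⟩⟩
  · -- perm
    have hzip : ∀ (P M : List ℕ), P.length = M.length →
        ((P.zip M).flatMap fun q => [q.1, q.2]).Perm (P ++ M) := by
      intro P M h
      induction P generalizing M with
      | nil =>
        rw [List.length_nil] at h
        rw [List.length_eq_zero_iff.mp h.symm]
        simp
      | cons a P ih =>
        cases M with
        | nil => simp at h
        | cons b M =>
          simp only [List.zip_cons_cons, List.flatMap_cons, List.cons_append]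
          refine List.Perm.cons a ?_
          refine ((ih M (by simpa using h)).cons b).trans ?_
          exact List.perm_middle.symm
    refine (hzip P M hPM).trans ?_
    have hM' : M = (List.range len).filter (fun i => !(decide (v i = 1))) := by
      rw [hM]
      apply List.filter_congr
      intro x hx
      rcases hv' x (List.mem_range.mp hx) with h | h <;> simp [h]
    rw [hM']
    exact List.filter_append_perm _ _
  · -- lt
    intro q hq
    obtain ⟨i, hi, hq'⟩ := List.getElem_of_mem hq
    rw [List.getElem_zip] at hq'
    have hlen' : i < P.length ∧ i < M.length := by
      rw [List.length_zip] at hi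
      omega
    rw [← hq']
    exact hlt i hlen'.1 hlen'.2
  · -- plus
    rintro ⟨a, b⟩ hq
    have h1 := (List.of_mem_zip hq).1
    have h2 := List.of_mem_filter h1
    simp only [decide_eq_true_eq] at h2
    exact h2
  · -- minus
    rintro ⟨a, b⟩ hq
    have h1 := (List.of_mem_zip hq).2
    have h2 := List.of_mem_filter h1
    simp only [decide_eq_true_eq] at h2
    exact h2

end AuxExist


section AuxWidth

lemma setWidth_le (S : Finset ℕ) (k : ℕ)
    (h : ∃ f : Fin k → ℕ × ℕ, (S : Set ℕ) = ⋃ i, Set.Icc (f i).1 (f i).2) :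
    setWidth S ≤ k := Nat.sInf_le h

lemma setWidth_cover_nonempty (S : Finset ℕ) :
    ∃ f : Fin S.card → ℕ × ℕ, (S : Set ℕ) = ⋃ i, Set.Icc (f i).1 (f i).2 := by
  refine ⟨fun i => ((S.equivFin.symm i : ℕ), (S.equivFin.symm i : ℕ)), ?_⟩
  ext x
  simp only [Finset.mem_coe, Set.mem_iUnion, Set.mem_Icc]
  constructor
  · intro hx
    exact ⟨S.equivFin ⟨x, hx⟩, by simp, by simp⟩
  · rintro ⟨i, h1, h2⟩
    have : x = ((S.equivFin.symm i : ℕ)) := le_antisymm h2 h1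
    rw [this]
    exact (S.equivFin.symm i).2

lemma setWidth_spec (S : Finset ℕ) :
    ∃ f : Fin (setWidth S) → ℕ × ℕ, (S : Set ℕ) = ⋃ i, Set.Icc (f i).1 (f i).2 := by
  have h : setWidth S ∈ {k | ∃ f : Fin k → ℕ × ℕ,
      (S : Set ℕ) = ⋃ i, Set.Icc (f i).1 (f i).2} :=
    Nat.sInf_mem ⟨S.card, setWidth_cover_nonempty S⟩
  exact h

lemma setWidth_shift (n : ℕ) (S T : Finset ℕ)
    (hT : (T : Set ℕ) = (fun x => x + n) '' ↑S) : setWidth T ≤ setWidth S := by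
  obtain ⟨f, hf⟩ := setWidth_spec S
  refine setWidth_le _ _ ⟨fun i => ((f i).1 + n, (f i).2 + n), ?_⟩
  rw [hT, hf, Set.image_iUnion]
  refine Set.iUnion_congr fun i => ?_
  ext x
  simp only [Set.mem_image, Set.mem_Icc]
  constructor
  · rintro ⟨y, ⟨hy1, hy2⟩, rfl⟩
    omega
  · rintro ⟨h1, h2⟩
    exact ⟨x - n, ⟨by omega, by omega⟩, by omega⟩

lemma mem_emb_image (n m : ℕ) (S : Set ℕ) (x : ℕ) :
    x ∈ (fun y => if y < n then y else y + m) '' S ↔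
      (x < n ∧ x ∈ S) ∨ (n + m ≤ x ∧ x - m ∈ S) := by
  constructor
  · rintro ⟨y, hy, rfl⟩
    dsimp only
    by_cases h : y < n
    · left
      rw [if_pos h]
      exact ⟨h, hy⟩
    · right
      rw [if_neg h]
      refine ⟨by omega, ?_⟩
      rw [Nat.add_sub_cancel]
      exact hy
  · rintro (⟨h1, h2⟩ | ⟨h1, h2⟩)
    · exact ⟨x, h2, if_pos h1⟩
    · exact ⟨x - m, h2, by dsimp only; rw [if_neg (by omega)]; omega⟩

lemma union_iUnion_congr {ι : Sort*} (K : Set ℕ) (A B : ι → Set ℕ)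
    (h : ∀ i, K ∪ A i = K ∪ B i) : K ∪ ⋃ i, A i = K ∪ ⋃ i, B i := by
  ext x
  by_cases hx : x ∈ K
  · simp [hx]
  · simp only [Set.mem_union, Set.mem_iUnion, hx, false_or]
    constructor <;> rintro ⟨i, hi⟩ <;> refine ⟨i, ?_⟩
    · have h2 : x ∈ K ∪ B i := (h i) ▸ Set.mem_union_right K hi
      rcases h2 with h2 | h2
      · exact absurd h2 hx
      · exact h2
    · have h2 : x ∈ K ∪ A i := (h i).symm ▸ Set.mem_union_right K hi
      rcases h2 with h2 | h2
      · exact absurd h2 hx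
      · exact h2

lemma emb_interval (n m a b : ℕ) :
    Set.Ico n (n + m) ∪ (fun y => if y < n then y else y + m) '' Set.Icc a b
      = Set.Ico n (n + m) ∪ Set.Icc (if b < n then a else if n ≤ a then a + m else a)
          (if b < n then b else b + m) := by
  ext x
  simp only [Set.mem_union, Set.mem_Ico, Set.mem_Icc, mem_emb_image]
  split_ifs <;> omega

lemma width_emb (n m : ℕ) (S T : Finset ℕ)
    (hT : (T : Set ℕ) = Set.Ico n (n + m) ∪
      (fun y => if y < n then y else y + m) '' ↑S) :
    setWidth T ≤ setWidth S + 1 := by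
  obtain ⟨f, hf⟩ := setWidth_spec S
  refine setWidth_le _ _ ⟨Fin.cons (if m = 0 then ((1 : ℕ), (0 : ℕ)) else (n, n + m - 1))
      (fun i => ((if (f i).2 < n then (f i).1 else if n ≤ (f i).1 then (f i).1 + m else (f i).1),
                 (if (f i).2 < n then (f i).2 else (f i).2 + m))), ?_⟩
  have hsplit : ∀ (g : Fin (setWidth S + 1) → Set ℕ),
      (⋃ i, g i) = g 0 ∪ ⋃ i : Fin (setWidth S), g i.succ := by
    intro g
    ext x
    simp only [Set.mem_iUnion, Set.mem_union, Fin.exists_fin_succ]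
  rw [hsplit]
  simp only [Fin.cons_zero, Fin.cons_succ]
  have h0 : Set.Icc (if m = 0 then ((1 : ℕ), (0 : ℕ)) else (n, n + m - 1)).1
      (if m = 0 then ((1 : ℕ), (0 : ℕ)) else (n, n + m - 1)).2 = Set.Ico n (n + m) := by
    split_ifs with hm <;> ext x <;> simp only [Set.mem_Icc, Set.mem_Ico] <;> omega
  rw [h0, hT, hf, Set.image_iUnion]
  exact union_iUnion_congr _ _ _ (fun i => emb_interval n m (f i).1 (f i).2)

end AuxWidth


section AuxDyck

lemma take_append_sum (l₁ l₂ : List ℤ) (k : ℕ) :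
    ((l₁ ++ l₂).take k).sum = (l₁.take k).sum + (l₂.take (k - l₁.length)).sum := by
  rw [List.take_append, List.sum_append]

lemma isDyck_cut (L π₁ R : List ℤ) (hσ : IsDyck (L ++ π₁ ++ R)) (hπ : IsDyck π₁) :
    IsDyck (L ++ R) := by
  obtain ⟨he, hs, hp⟩ := hσ
  obtain ⟨he1, hs1, hp1⟩ := hπ
  refine ⟨?_, ?_, ?_⟩
  · intro a ha
    apply he
    simp only [List.mem_append] at ha ⊢
    tauto
  · simp only [List.sum_append] at hs ⊢
    rw [hs1] at hs
    linarith
  · intro k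
    rcases le_or_gt k L.length with hk | hk
    · have h1 : ((L ++ R).take k).sum = ((L ++ π₁ ++ R).take k).sum := by
        rw [take_append_sum, take_append_sum, take_append_sum,
          show k - L.length = 0 by omega,
          show k - (L ++ π₁).length = 0 by simp; omega]
        simp
      rw [h1]
      exact hp k
    · have h1 : ((L ++ R).take k).sum = ((L ++ π₁ ++ R).take (k + π₁.length)).sum := by
        rw [take_append_sum, take_append_sum, take_append_sum,
          List.take_of_length_le (show L.length ≤ k by omega),
          List.take_of_length_le (show L.length ≤ k + π₁.length by omega),
          List.take_of_length_le (show π₁.length ≤ k + π₁.length - L.length by omega),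
          hs1]
        have : k + π₁.length - (L ++ π₁).length = k - L.length := by
          simp only [List.length_append]
          omega
        rw [this]
        ring
      rw [h1]
      exact hp _
end AuxDyck


section AuxGlue

lemma repairing_glue (L π₁ R : List ℤ) (p₁ : RePairing π₁) (p₂ : RePairing (L ++ R)) :
    ∃ p : RePairing (L ++ π₁ ++ R),
      repWidth p ≤ max (repWidth p₁) (1 + repWidth p₂) := by
  have hfm : ∀ (g : ℕ → ℕ) (l : List (ℕ × ℕ)),
      ((l.map fun q => (g q.1, g q.2)).flatMap fun q => [q.1, q.2])
        = (l.flatMap fun q => [q.1, q.2]).map g := by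
    intro g l
    induction l with
    | nil => simp
    | cons a l ih => simp [ih]
  set n := L.length with hn
  set m := π₁.length with hm
  set r := R.length with hr
  set emb : ℕ → ℕ := fun x => if x < n then x else x + m with hemb
  set A : List (ℕ × ℕ) := p₁.pairs.map (fun q => (q.1 + n, q.2 + n)) with hA
  set B : List (ℕ × ℕ) := p₂.pairs.map (fun q => (emb q.1, emb q.2)) with hB
  have haA : A.length = p₁.pairs.length := List.length_map _
  have haB : B.length = p₂.pairs.length := List.length_map _
  have hmem1 : ∀ q ∈ p₁.pairs, q.1 < m ∧ q.2 < m := by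
    intro q hq
    have h1 : q.1 ∈ p₁.pairs.flatMap fun q => [q.1, q.2] :=
      List.mem_flatMap.mpr ⟨q, hq, by simp⟩
    have h2 : q.2 ∈ p₁.pairs.flatMap fun q => [q.1, q.2] :=
      List.mem_flatMap.mpr ⟨q, hq, by simp⟩
    exact ⟨List.mem_range.mp ((p₁.perm.mem_iff).mp h1),
      List.mem_range.mp ((p₁.perm.mem_iff).mp h2)⟩
  have hmem2 : ∀ q ∈ p₂.pairs, q.1 < n + r ∧ q.2 < n + r := by
    have hlen : (L ++ R).length = n + r := by simp [hn, hr]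
    intro q hq
    have h1 : q.1 ∈ p₂.pairs.flatMap fun q => [q.1, q.2] :=
      List.mem_flatMap.mpr ⟨q, hq, by simp⟩
    have h2 : q.2 ∈ p₂.pairs.flatMap fun q => [q.1, q.2] :=
      List.mem_flatMap.mpr ⟨q, hq, by simp⟩
    have h1' := List.mem_range.mp ((p₂.perm.mem_iff).mp h1)
    have h2' := List.mem_range.mp ((p₂.perm.mem_iff).mp h2)
    omega
  have hget1 : ∀ x, x < m → (L ++ π₁ ++ R).getD (x + n) 0 = π₁.getD x 0 := by
    intro x hx
    rw [List.getD_eq_getElem?_getD, List.getD_eq_getElem?_getD,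
      List.getElem?_append_left (by simp only [List.length_append]; omega),
      List.getElem?_append_right (by omega)]
    have e : x + n - L.length = x := by omega
    rw [e]
  have hget2 : ∀ x, x < n + r → (L ++ π₁ ++ R).getD (emb x) 0 = (L ++ R).getD x 0 := by
    intro x hx
    rw [List.getD_eq_getElem?_getD, List.getD_eq_getElem?_getD, hemb]
    dsimp only
    by_cases h : x < n
    · rw [if_pos h,
        List.getElem?_append_left (l₂ := R) (by simp only [List.length_append]; omega),
        List.getElem?_append_left (by omega),
        List.getElem?_append_left (by omega)]
    · rw [if_neg h,
        List.getElem?_append_right (l₁ := L ++ π₁) (by simp only [List.length_append]; omega),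
        List.getElem?_append_right (l₁ := L) (by omega)]
      have e : x + m - (L ++ π₁).length = x - L.length := by
        simp only [List.length_append]
        omega
      rw [e]
  -- the five components
  have hperm : ((A ++ B).flatMap fun q => [q.1, q.2]).Perm
      (List.range (L ++ π₁ ++ R).length) := by
    have hσl : (L ++ π₁ ++ R).length = n + m + r := by
      simp only [List.length_append, hn, hm, hr]
    rw [hσl, List.flatMap_append]
    have e1 : (A.flatMap fun q => [q.1, q.2])
        = (p₁.pairs.flatMap fun q => [q.1, q.2]).map (fun x => x + n) :=
      hfm (fun x => x + n) p₁.pairs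
    have e2 : (B.flatMap fun q => [q.1, q.2])
        = (p₂.pairs.flatMap fun q => [q.1, q.2]).map emb := hfm emb p₂.pairs
    rw [e1, e2]
    refine ((p₁.perm.map (fun x => x + n)).append (p₂.perm.map emb)).trans ?_
    have e3 : List.range (L ++ R).length = List.range (n + r) := by
      congr 1
      simp [hn, hr]
    have e4 : List.range π₁.length = List.range m := by rw [hm]
    rw [e3, e4]
    -- key permutation
    have h1 : (List.range (n + r)).map emb
        = List.range n ++ (List.range r).map (fun x => n + x + m) := by
      rw [List.range_add, List.map_append, List.map_map]
      congr 1
      · have h2 : ∀ x ∈ List.range n, emb x = x := by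
          intro x hx
          rw [hemb]
          exact if_pos (List.mem_range.mp hx)
        rw [List.map_congr_left h2]
        simp
      · apply List.map_congr_left
        intro x _
        show emb (n + x) = n + x + m
        rw [hemb]
        exact if_neg (by omega)
    have h2 : List.range (n + m + r)
        = List.range n ++ ((List.range m).map (fun x => n + x)
          ++ (List.range r).map (fun x => n + (m + x))) := by
      rw [show n + m + r = n + (m + r) by ring, List.range_add, List.range_add,
        List.map_append, List.map_map]
      rfl
    rw [h1, h2]
    have e5 : (List.range m).map (fun x => x + n) = (List.range m).map (fun x => n + x) :=
      List.map_congr_left (fun x _ => Nat.add_comm x n)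
    have e6 : (List.range r).map (fun x => n + x + m)
        = (List.range r).map (fun x => n + (m + x)) :=
      List.map_congr_left (fun x _ => by omega)
    rw [e5, e6, ← List.append_assoc]
    refine (List.perm_append_comm.append_right _).trans ?_
    rw [List.append_assoc]
  have hlt' : ∀ q ∈ A ++ B, q.1 < q.2 := by
    intro q hq
    rw [List.mem_append] at hq
    rcases hq with hq | hq
    · rw [hA, List.mem_map] at hq
      obtain ⟨q₀, hq₀, rfl⟩ := hq
      exact Nat.add_lt_add_right (p₁.lt q₀ hq₀) n
    · rw [hB, List.mem_map] at hq
      obtain ⟨q₀, hq₀, rfl⟩ := hq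
      have h2 := p₂.lt q₀ hq₀
      show emb q₀.1 < emb q₀.2
      rw [hemb]
      dsimp only
      split_ifs <;> omega
  have hplus : ∀ q ∈ A ++ B, (L ++ π₁ ++ R).getD q.1 0 = 1 := by
    intro q hq
    rw [List.mem_append] at hq
    rcases hq with hq | hq
    · rw [hA, List.mem_map] at hq
      obtain ⟨q₀, hq₀, rfl⟩ := hq
      show (L ++ π₁ ++ R).getD (q₀.1 + n) 0 = 1
      rw [hget1 q₀.1 (hmem1 q₀ hq₀).1]
      exact p₁.plus q₀ hq₀
    · rw [hB, List.mem_map] at hq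
      obtain ⟨q₀, hq₀, rfl⟩ := hq
      show (L ++ π₁ ++ R).getD (emb q₀.1) 0 = 1
      rw [hget2 q₀.1 (hmem2 q₀ hq₀).1]
      exact p₂.plus q₀ hq₀
  have hminus : ∀ q ∈ A ++ B, (L ++ π₁ ++ R).getD q.2 0 = -1 := by
    intro q hq
    rw [List.mem_append] at hq
    rcases hq with hq | hq
    · rw [hA, List.mem_map] at hq
      obtain ⟨q₀, hq₀, rfl⟩ := hq
      show (L ++ π₁ ++ R).getD (q₀.2 + n) 0 = -1
      rw [hget1 q₀.2 (hmem1 q₀ hq₀).2]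
      exact p₁.minus q₀ hq₀
    · rw [hB, List.mem_map] at hq
      obtain ⟨q₀, hq₀, rfl⟩ := hq
      show (L ++ π₁ ++ R).getD (emb q₀.2) 0 = -1
      rw [hget2 q₀.2 (hmem2 q₀ hq₀).2]
      exact p₂.minus q₀ hq₀
  refine ⟨⟨A ++ B, hperm, hlt', hplus, hminus⟩, ?_⟩
  simp only [repWidth]
  apply Finset.sup_le
  intro t ht
  rw [Finset.mem_range, List.length_append] at ht
  rcases le_or_gt t A.length with h | h
  · -- phase 1
    have htake : (((A ++ B).take t).flatMap fun q => [q.1, q.2])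
        = ((p₁.pairs.take t).flatMap fun q => [q.1, q.2]).map (fun x => x + n) := by
      rw [List.take_append, show t - A.length = 0 by omega, List.take_zero,
        List.append_nil, hA, ← List.map_take]
      exact hfm (fun x => x + n) (p₁.pairs.take t)
    rw [htake]
    refine le_trans (setWidth_shift n (((p₁.pairs.take t).flatMap fun q => [q.1, q.2]).toFinset)
        ((((p₁.pairs.take t).flatMap fun q => [q.1, q.2]).map (fun x => x + n)).toFinset) ?_)
      (le_trans ?_ (le_max_left _ _))
    · ext x
      simp [Set.mem_image]
    · exact Finset.le_sup
        (f := fun u => setWidth ((p₁.pairs.take u).flatMap fun q => [q.1, q.2]).toFinset)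
        (s := Finset.range (p₁.pairs.length + 1)) (b := t)
        (Finset.mem_range.mpr (by omega))
  · -- phase 2
    set s := t - A.length with hs
    have hsB : s ≤ p₂.pairs.length := by omega
    have htake : (((A ++ B).take t).flatMap fun q => [q.1, q.2])
        = ((p₁.pairs.flatMap fun q => [q.1, q.2]).map (fun x => x + n)) ++
          (((p₂.pairs.take s).flatMap fun q => [q.1, q.2]).map emb) := by
      rw [List.take_append, List.take_of_length_le (by omega),
        List.flatMap_append, hA, hB, ← List.map_take]
      congr 1
      · exact hfm (fun x => x + n) p₁.pairs
      · exact hfm emb (p₂.pairs.take s)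
    rw [htake]
    refine le_trans (width_emb n m ((p₂.pairs.take s).flatMap fun q => [q.1, q.2]).toFinset _ ?_)
      (le_trans ?_ (le_max_right _ _))
    · ext x
      simp only [Finset.mem_coe, List.mem_toFinset, List.mem_append, List.mem_map,
        Set.mem_union, Set.mem_Ico, Set.mem_image]
      constructor
      · rintro (⟨y, hy, rfl⟩ | ⟨y, hy, rfl⟩)
        · left
          have hy' := List.mem_range.mp ((p₁.perm.mem_iff).mp hy)
          omega
        · right
          exact ⟨y, hy, rfl⟩
      · rintro (⟨hx1, hx2⟩ | ⟨y, hy, rfl⟩)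
        · left
          refine ⟨x - n, ?_, by omega⟩
          exact (p₁.perm.mem_iff).mpr (List.mem_range.mpr (by omega))
        · right
          exact ⟨y, hy, rfl⟩
    · have hb : setWidth ((p₂.pairs.take s).flatMap fun q => [q.1, q.2]).toFinset
          ≤ (Finset.range (p₂.pairs.length + 1)).sup
            (fun u => setWidth ((p₂.pairs.take u).flatMap fun q => [q.1, q.2]).toFinset) :=
        by
          have h := Finset.le_sup
            (f := fun u => setWidth ((p₂.pairs.take u).flatMap fun q => [q.1, q.2]).toFinset)
            (Finset.mem_range.mpr (Nat.lt_succ_of_le hsB))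
          exact h
      omega

end AuxGlue

/-- If a Dyck word σ factorizes as L · π₁ · R with π₁ a Dyck word, then L · R
is also a Dyck word and width(σ) ≤ max(width(π₁), 1 + width(L · R)). -/
theorem dyckWidth_cut (L π₁ R : List ℤ)
    (hσ : IsDyck (L ++ π₁ ++ R)) (hπ : IsDyck π₁) :
    IsDyck (L ++ R) ∧
    dyckWidth (L ++ π₁ ++ R) ≤ max (dyckWidth π₁) (1 + dyckWidth (L ++ R)) := by
  have hLR := isDyck_cut L π₁ R hσ hπ
  refine ⟨hLR, ?_⟩
  obtain ⟨p₁⟩ := exists_repairing π₁ hπ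
  obtain ⟨p₂⟩ := exists_repairing _ hLR
  have h1 : dyckWidth π₁ ∈ {k | ∃ p : RePairing π₁, repWidth p = k} :=
    Nat.sInf_mem ⟨repWidth p₁, p₁, rfl⟩
  have h2 : dyckWidth (L ++ R) ∈ {k | ∃ p : RePairing (L ++ R), repWidth p = k} :=
    Nat.sInf_mem ⟨repWidth p₂, p₂, rfl⟩
  obtain ⟨q₁, hq₁⟩ := h1
  obtain ⟨q₂, hq₂⟩ := h2
  obtain ⟨p, hp⟩ := repairing_glue L π₁ R q₁ q₂
  have h3 : dyckWidth (L ++ π₁ ++ R) ≤ repWidth p := Nat.sInf_le ⟨p, rfl⟩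
  rw [hq₁, hq₂] at hp
  exact le_trans h3 hp
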